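/- Let (G,T;A,B) be a quasicomb, let F be a minimum join of (G,T), let x, y ∈ V(G), and let P be an F-balanced path between x and y. Then: (i) if x, y ∈ A, then w_F(P) = 0; (ii) if x ∈ A and y ∈ B, then w_F(P) ∈ {1, −1}, and w_F(P) = −1 if and only if the edge of P incident to y is in F (so w_F(P) = 1 if and only if that edge is not in F); (iii) if x, y ∈ B, then w_F(P) ∈ {−2, 0, 2}, and w_F(P) = −2 if and only if both edges of P incident to its ends are in F, while w_F(P) = 2 if and only if both edges of P incident to its ends are not in F. -/

import Mathlib

/-!
Common definitions: finite simple graphs given as (vertex set, edge set) pairs,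
grafts, joins, weights/distances, ears, bipartite grafts, combs, quasicombs,
critical grafts, effective ear grafts.
-/

/-- A finite simple graph on an ambient (finite) vertex type `V`:
a set of vertices and a set of (non-loop) edges between them. -/
structure VEGraph (V : Type*) where
  verts : Set V
  edges : Set (Sym2 V)
  not_isDiag : ∀ e ∈ edges, ¬ e.IsDiag
  mem_verts : ∀ e ∈ edges, ∀ x ∈ e, x ∈ verts

namespace VEGraph

variable {V : Type*}

/-- Adjacency. -/
def Adj (G : VEGraph V) (u v : V) : Prop := s(u, v) ∈ G.edges

/-- Degree of a vertex. -/
noncomputable def deg (G : VEGraph V) (v : V) : ℕ := {e ∈ G.edges | v ∈ e}.ncard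

/-- `G` is connected. -/
def Connected (G : VEGraph V) : Prop :=
  G.verts.Nonempty ∧ ∀ u ∈ G.verts, ∀ v ∈ G.verts, Relation.ReflTransGen G.Adj u v

/-- `H` is a subgraph of `G`. -/
def IsSubgraph (H G : VEGraph V) : Prop := H.verts ⊆ G.verts ∧ H.edges ⊆ G.edges

/-- `(G, T)` is a graft: every connected component of `G` contains an even
number of vertices of `T`. -/
def IsGraft (G : VEGraph V) (T : Set V) : Prop :=
  T ⊆ G.verts ∧ ∀ v ∈ G.verts, Even {u ∈ T | Relation.ReflTransGen G.Adj v u}.ncard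

/-- `F` is a join of `(G, T)`: a vertex is incident to an odd number of edges
of `F` iff it lies in `T`. -/
def IsJoin (G : VEGraph V) (T : Set V) (F : Set (Sym2 V)) : Prop :=
  F ⊆ G.edges ∧ ∀ v : V, (Odd {e ∈ F | v ∈ e}.ncard ↔ v ∈ T)

/-- `ν(G, T)`: the minimum cardinality of a join of `(G, T)`. -/
noncomputable def nu (G : VEGraph V) (T : Set V) : ℕ :=
  sInf {n | ∃ F, G.IsJoin T F ∧ F.ncard = n}

/-- `F` is a minimum join of `(G, T)`. -/
def IsMinJoin (G : VEGraph V) (T : Set V) (F : Set (Sym2 V)) : Prop :=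
  G.IsJoin T F ∧ F.ncard = G.nu T

/-- The `F`-weight of a (sub)graph `H`: `|E(H) ∖ F| − |E(H) ∩ F|`. -/
noncomputable def wF (F : Set (Sym2 V)) (H : VEGraph V) : ℤ :=
  ((H.edges \ F).ncard : ℤ) - ((H.edges ∩ F).ncard : ℤ)

/-- `P` is a path (graph): connected, all degrees at most two, and some vertex
of degree less than two. -/
def IsPathGraph (P : VEGraph V) : Prop :=
  P.Connected ∧ (∀ v ∈ P.verts, P.deg v ≤ 2) ∧ ∃ v ∈ P.verts, P.deg v < 2

/-- `P` is a circuit: connected and every vertex has degree two. -/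
def IsCircuitGraph (P : VEGraph V) : Prop :=
  P.Connected ∧ ∀ v ∈ P.verts, P.deg v = 2

/-- `P` is a path with ends `x` and `y`. -/
def IsPathBetween (P : VEGraph V) (x y : V) : Prop :=
  P.IsPathGraph ∧ x ∈ P.verts ∧ y ∈ P.verts ∧
    ∀ v ∈ P.verts, (P.deg v ≤ 1 ↔ v = x ∨ v = y)

/-- The `F`-distance between `u` and `v` in `G`: the minimum `F`-weight of a
path of `G` between `u` and `v`. -/
noncomputable def distF (G : VEGraph V) (F : Set (Sym2 V)) (u v : V) : ℤ :=
  sInf {w | ∃ P : VEGraph V, P.IsSubgraph G ∧ P.IsPathBetween u v ∧ wF F P = w}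

/-- A path `P` of `G` between `u` and `v` is `F`-shortest if it has minimum
`F`-weight among all such paths. -/
def IsShortestPath (G : VEGraph V) (F : Set (Sym2 V)) (P : VEGraph V) (u v : V) : Prop :=
  P.IsSubgraph G ∧ P.IsPathBetween u v ∧
    ∀ Q : VEGraph V, Q.IsSubgraph G → Q.IsPathBetween u v → wF F P ≤ wF F Q

/-- The graph consisting of the single vertex `r`. -/
def single (r : V) : VEGraph V where
  verts := {r}
  edges := ∅
  not_isDiag := by intro e he; exact absurd he (Set.notMem_empty e)
  mem_verts := by intro e he; exact absurd he (Set.notMem_empty e)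

/-- The sum `G + H` of two graphs. -/
def sum (G H : VEGraph V) : VEGraph V where
  verts := G.verts ∪ H.verts
  edges := G.edges ∪ H.edges
  not_isDiag := by
    rintro e (he | he)
    · exact G.not_isDiag e he
    · exact H.not_isDiag e he
  mem_verts := by
    rintro e (he | he) x hx
    · exact Or.inl (G.mem_verts e he x hx)
    · exact Or.inr (H.mem_verts e he x hx)

/-- `P` is a round ear relative to `X` with bonds `s` and `t`: either a path
whose ends `s ≠ t` are exactly its bonds, or a circuit sharing exactly the one
vertex `s = t` with `X`. -/
def IsRoundEar (P : VEGraph V) (X : Set V) (s t : V) : Prop :=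
  P.edges.Nonempty ∧
    ((s ≠ t ∧ P.IsPathBetween s t ∧ P.verts ∩ X = {s, t}) ∨
      (s = t ∧ P.IsCircuitGraph ∧ P.verts ∩ X = {s}))

/-- `P` is a straight ear relative to `X` with bond `t`: a path exactly one of
whose ends, namely `t`, is a bond, and with no other bonds. -/
def IsStraightEar (P : VEGraph V) (X : Set V) (t : V) : Prop :=
  P.edges.Nonempty ∧ (∃ v, v ≠ t ∧ P.IsPathBetween v t) ∧ P.verts ∩ X = {t}

/-- `P` is an ear relative to `X`. -/
def IsEar (P : VEGraph V) (X : Set V) : Prop :=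
  (∃ s t, P.IsRoundEar X s t) ∨ ∃ t, P.IsStraightEar X t

/-- `(G, T; A, B)` is a bipartite graft with (ordered) color classes `A, B`. -/
def IsBipartiteGraft (G : VEGraph V) (T A B : Set V) : Prop :=
  G.IsGraft T ∧ Disjoint A B ∧ A ∪ B = G.verts ∧
    ∀ e ∈ G.edges, ∃ a ∈ A, ∃ b ∈ B, e = s(a, b)

/-- A comb: a bipartite graft with `B ⊆ T` and `ν(G, T) = |B|`. -/
def IsComb (G : VEGraph V) (T A B : Set V) : Prop :=
  G.IsBipartiteGraft T A B ∧ B ⊆ T ∧ G.nu T = B.ncard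

/-- A quasicomb: a bipartite graft with `ν(G, T) = |B ∩ T|`. -/
def IsQuasicomb (G : VEGraph V) (T A B : Set V) : Prop :=
  G.IsBipartiteGraft T A B ∧ G.nu T = (B ∩ T).ncard

/-- A path `P` between `x` and `y` is `F`-balanced (w.r.t. the tooth set `Bt`)
if every vertex of `V(P) ∩ Bt ∖ {x, y}` is incident in `P` to exactly one edge
of `F`. -/
def IsBalancedPath (P : VEGraph V) (Bt : Set V) (F : Set (Sym2 V)) (x y : V) : Prop :=
  P.IsPathBetween x y ∧
    ∀ v ∈ (P.verts ∩ Bt) \ {x, y}, {e ∈ P.edges ∩ F | v ∈ e}.ncard = 1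

/-- `M` is a perfect matching of the subgraph of `G` induced on `S`:
`M ⊆ E(G)`, all ends of edges of `M` lie in `S`, and every vertex of `S` is
incident to exactly one edge of `M`. -/
def IsPerfectMatchingOn (G : VEGraph V) (S : Set V) (M : Set (Sym2 V)) : Prop :=
  M ⊆ G.edges ∧ (∀ e ∈ M, ∀ x ∈ e, x ∈ S) ∧ ∀ v ∈ S, {e ∈ M | v ∈ e}.ncard = 1

/-- `G` is factor-critical: for every vertex `v`, `G − v` has a perfect
matching. -/
def FactorCritical (G : VEGraph V) : Prop :=
  ∀ v ∈ G.verts, ∃ M, G.IsPerfectMatchingOn (G.verts \ {v}) M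

/-- `(G, T)` is a factor-critical graft with root `r`: a connected graft with
`ν(G, T) = ν(G, T Δ {r, v})` for every vertex `v ≠ r`. -/
def FactorCriticalGraft (G : VEGraph V) (T : Set V) (r : V) : Prop :=
  G.Connected ∧ G.IsGraft T ∧ r ∈ G.verts ∧
    ∀ v ∈ G.verts \ {r}, G.nu T = G.nu (symmDiff T {r, v})

/-- `(G, T; A, B)` is a critical bipartite graft (critical quasicomb) with root
`r ∈ B`: connected, and `ν(G,T) − ν(G, T Δ {x,r})` is `1` for `x ∈ A` and `0`
for `x ∈ B`. -/
def IsCriticalBipGraft (G : VEGraph V) (T A B : Set V) (r : V) : Prop :=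
  G.IsBipartiteGraft T A B ∧ G.Connected ∧ r ∈ B ∧
    (∀ x ∈ A, (G.nu T : ℤ) - (G.nu (symmDiff T {x, r}) : ℤ) = 1) ∧
    (∀ x ∈ B, (G.nu T : ℤ) - (G.nu (symmDiff T {x, r}) : ℤ) = 0)

/-- `(P, T'; A', B')` is an ear graft relative to the bipartite graft
`(G, T; A, B)`. -/
def IsEarGraft (G : VEGraph V) (A B : Set V) (P : VEGraph V) (T' A' B' : Set V) : Prop :=
  P.IsBipartiteGraft T' A' B' ∧ P.IsEar G.verts ∧ A ∩ B' = ∅ ∧ A' ∩ B = ∅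

/-- `(P, T'; A', B')` is an effective ear graft relative to the bipartite graft
`(G, T; A, B)` with bonds `s` and `t` (with `s = t` both for circuit round ears
and for straight ears). Writing `T̂ = T Δ T'`, `Â = A ∪ A'`, `B̂ = B ∪ B'` for
the data of the sum graft:
(i) every vertex of `V(P) ∖ {s, t}` lying in `B̂` belongs to `T̂`;
(ii) no bond lying in `B̂` belongs to `T̂`;
(iii) if `P` is a straight ear with bond `s` and other end `v`, then it is not
the case that `v ∈ Â ∧ v ∈ T̂` and not the case that `s ∈ Â ∧ s ∉ T̂`. -/
def IsEffectiveEarGraft (G : VEGraph V) (T A B : Set V) (P : VEGraph V)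
    (T' A' B' : Set V) (s t : V) : Prop :=
  P.IsBipartiteGraft T' A' B' ∧ A ∩ B' = ∅ ∧ A' ∩ B = ∅ ∧
    (P.IsRoundEar G.verts s t ∨ (s = t ∧ P.IsStraightEar G.verts s)) ∧
    (∀ v ∈ (P.verts \ {s, t}) ∩ (B ∪ B'), v ∈ symmDiff T T') ∧
    (s ∈ B ∪ B' → s ∉ symmDiff T T') ∧ (t ∈ B ∪ B' → t ∉ symmDiff T T') ∧
    (∀ v, P.IsStraightEar G.verts s → v ∈ P.verts → P.deg v ≤ 1 → v ≠ s →
      (¬(v ∈ A ∪ A' ∧ v ∈ symmDiff T T') ∧ ¬(s ∈ A ∪ A' ∧ s ∉ symmDiff T T')))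

end VEGraph


open Classical in
private lemma count_lemma {V : Type*} [Fintype V] (E : Set (Sym2 V)) (W : Finset V)
    (h : ∀ e ∈ E, ∃! v, (v ∈ W ∧ v ∈ e)) :
    E.ncard = ∑ v ∈ W, {e ∈ E | v ∈ e}.ncard := by
  classical
  have hfin : E.Finite := Set.toFinite E
  have h2 : ∀ v : V, {e ∈ E | v ∈ e}.ncard = (hfin.toFinset.filter (fun e => v ∈ e)).card := by
    intro v
    rw [← Set.ncard_coe_finset]
    congr 1
    ext e
    simp only [Finset.coe_filter, Set.Finite.mem_toFinset, Set.mem_setOf_eq, Set.mem_sep_iff]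
  have key : hfin.toFinset = W.biUnion (fun v => hfin.toFinset.filter (fun e => v ∈ e)) := by
    ext e
    simp only [Finset.mem_biUnion, Finset.mem_filter, Set.Finite.mem_toFinset]
    constructor
    · intro he
      obtain ⟨v, ⟨hvW, hve⟩, -⟩ := h e he
      exact ⟨v, hvW, he, hve⟩
    · rintro ⟨v, -, he, -⟩
      exact he
  have hdisj : ∀ v ∈ W, ∀ w ∈ W, v ≠ w →
      Disjoint (hfin.toFinset.filter (fun e => v ∈ e)) (hfin.toFinset.filter (fun e => w ∈ e)) := by
    intro v hv w hw hvw
    rw [Finset.disjoint_left]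
    intro e hev hew
    rw [Finset.mem_filter, Set.Finite.mem_toFinset] at hev hew
    exact hvw ((h e hev.1).unique ⟨hv, hev.2⟩ ⟨hw, hew.2⟩)
  calc E.ncard = hfin.toFinset.card := Set.ncard_eq_toFinset_card _ hfin
    _ = ∑ v ∈ W, (hfin.toFinset.filter (fun e => v ∈ e)).card := by
        conv_lhs => rw [key, Finset.card_biUnion hdisj]
    _ = ∑ v ∈ W, {e ∈ E | v ∈ e}.ncard := by simp [h2]

/-- Let `(G,T;A,B)` be a quasicomb, `F` a minimum join of `(G,T)`,
`x, y ∈ V(G)`, and `P` an `F`-balanced path of `G` between `x` and `y`. Then: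
(i) if `x, y ∈ A` then `w_F(P) = 0`;
(ii) if `x ∈ A`, `y ∈ B` then `w_F(P) ∈ {1, −1}`, and `w_F(P) = −1` iff the
edge of `P` incident to `y` is in `F`, and `w_F(P) = 1` iff it is not in `F`;
(iii) if `x, y ∈ B` then `w_F(P) ∈ {−2, 0, 2}`, and `w_F(P) = −2` iff both
edges of `P` incident to its ends are in `F`, and `w_F(P) = 2` iff both edges
of `P` incident to its ends are not in `F`. -/
theorem statement8 {V : Type*} [Fintype V] (G : VEGraph V) (T A B : Set V)
    (hqc : G.IsQuasicomb T A B) (F : Set (Sym2 V)) (hmin : G.IsMinJoin T F)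
    (x y : V) (hx : x ∈ G.verts) (hy : y ∈ G.verts)
    (P : VEGraph V) (hPsub : P.IsSubgraph G) (hPbal : P.IsBalancedPath B F x y) :
    (x ∈ A → y ∈ A → VEGraph.wF F P = 0) ∧
    (x ∈ A → y ∈ B →
      (VEGraph.wF F P = 1 ∨ VEGraph.wF F P = -1) ∧
      (VEGraph.wF F P = -1 ↔ ∃ e ∈ P.edges, y ∈ e ∧ e ∈ F) ∧
      (VEGraph.wF F P = 1 ↔ ∃ e ∈ P.edges, y ∈ e ∧ e ∉ F)) ∧
    (x ∈ B → y ∈ B →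
      (VEGraph.wF F P = -2 ∨ VEGraph.wF F P = 0 ∨ VEGraph.wF F P = 2) ∧
      (VEGraph.wF F P = -2 ↔
        (∃ e ∈ P.edges, x ∈ e ∧ e ∈ F) ∧ (∃ e ∈ P.edges, y ∈ e ∧ e ∈ F)) ∧
      (VEGraph.wF F P = 2 ↔
        (∃ e ∈ P.edges, x ∈ e ∧ e ∉ F) ∧ (∃ e ∈ P.edges, y ∈ e ∧ e ∉ F))) := by
  classical
  obtain ⟨hbG, -⟩ := hqc
  obtain ⟨-, hABdisj, hABunion, hedge⟩ := hbG
  obtain ⟨hPB, hbal⟩ := hPbal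
  obtain ⟨hPG, hxP, hyP, hdegiff⟩ := hPB
  obtain ⟨hPconn, hdeg2, -⟩ := hPG
  -- every edge of P has a unique end in P.verts ∩ B, and a unique end in P.verts ∩ A
  have hBend : ∀ e ∈ P.edges, ∃! v, v ∈ (P.verts ∩ B) ∧ v ∈ e := by
    intro e he
    obtain ⟨a, ha, b, hb, rfl⟩ := hedge e (hPsub.2 he)
    have hbv : b ∈ P.verts := P.mem_verts _ he b (by simp)
    refine ⟨b, ⟨⟨hbv, hb⟩, by simp⟩, ?_⟩
    rintro v ⟨⟨-, hvB⟩, hve⟩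
    rcases Sym2.mem_iff.mp hve with rfl | rfl
    · exact absurd hvB (Set.disjoint_left.mp hABdisj ha)
    · rfl
  have hAend : ∀ e ∈ P.edges, ∃! v, v ∈ (P.verts ∩ A) ∧ v ∈ e := by
    intro e he
    obtain ⟨a, ha, b, hb, rfl⟩ := hedge e (hPsub.2 he)
    have hav : a ∈ P.verts := P.mem_verts _ he a (by simp)
    refine ⟨a, ⟨⟨hav, ha⟩, by simp⟩, ?_⟩
    rintro v ⟨⟨-, hvA⟩, hve⟩
    rcases Sym2.mem_iff.mp hve with rfl | rfl
    · rfl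
    · exact absurd hvA (Set.disjoint_right.mp hABdisj hb)
  set WB := (P.verts ∩ B).toFinite.toFinset with hWBdef
  set WA := (P.verts ∩ A).toFinite.toFinset with hWAdef
  have hmemWB : ∀ v, v ∈ WB ↔ v ∈ P.verts ∧ v ∈ B := by
    intro v; rw [hWBdef, Set.Finite.mem_toFinset]; rfl
  have hmemWA : ∀ v, v ∈ WA ↔ v ∈ P.verts ∧ v ∈ A := by
    intro v; rw [hWAdef, Set.Finite.mem_toFinset]; rfl
  have hBendF : ∀ (E' : Set (Sym2 V)), E' ⊆ P.edges → ∀ e ∈ E', ∃! v, v ∈ WB ∧ v ∈ e := by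
    intro E' hE' e he
    obtain ⟨v, hv, huniq⟩ := hBend e (hE' he)
    exact ⟨v, ⟨(hmemWB v).mpr hv.1, hv.2⟩,
      fun w hw => huniq w ⟨(hmemWB w).mp hw.1, hw.2⟩⟩
  have hAendF : ∀ e ∈ P.edges, ∃! v, v ∈ WA ∧ v ∈ e := by
    intro e he
    obtain ⟨v, hv, huniq⟩ := hAend e he
    exact ⟨v, ⟨(hmemWA v).mpr hv.1, hv.2⟩,
      fun w hw => huniq w ⟨(hmemWA w).mp hw.1, hw.2⟩⟩
  set n₁ : V → ℕ := fun v => {e ∈ P.edges \ F | v ∈ e}.ncard with hn₁def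
  set n₂ : V → ℕ := fun v => {e ∈ P.edges ∩ F | v ∈ e}.ncard with hn₂def
  have hc1 : (P.edges \ F).ncard = ∑ v ∈ WB, n₁ v :=
    count_lemma _ _ (hBendF _ Set.diff_subset)
  have hc2 : (P.edges ∩ F).ncard = ∑ v ∈ WB, n₂ v :=
    count_lemma _ _ (hBendF _ Set.inter_subset_left)
  have hcB : P.edges.ncard = ∑ v ∈ WB, P.deg v :=
    count_lemma _ _ (hBendF _ (le_refl _))
  have hcA : P.edges.ncard = ∑ v ∈ WA, P.deg v :=
    count_lemma _ _ hAendF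
  -- additivity at each vertex
  have hadd : ∀ v, n₁ v + n₂ v = P.deg v := by
    intro v
    have hd : {e ∈ P.edges | v ∈ e} =
        {e ∈ P.edges \ F | v ∈ e} ∪ {e ∈ P.edges ∩ F | v ∈ e} := by
      ext e
      by_cases he : e ∈ F <;> simp [he, Set.mem_sep_iff, Set.mem_diff] <;> tauto
    have hdis : Disjoint {e ∈ P.edges \ F | v ∈ e} {e ∈ P.edges ∩ F | v ∈ e} := by
      rw [Set.disjoint_left]
      rintro e ⟨⟨-, heF⟩, -⟩ ⟨⟨-, heF'⟩, -⟩
      exact heF heF'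
    rw [VEGraph.deg, hd, Set.ncard_union_eq hdis (Set.toFinite _) (Set.toFinite _)]
  -- internal degree-2 vertices
  have hdeg_int : ∀ v ∈ P.verts, v ≠ x → v ≠ y → P.deg v = 2 := by
    intro v hv hvx hvy
    have h1 := hdeg2 v hv
    have h2 : ¬ (P.deg v ≤ 1) := by
      intro hle
      rcases (hdegiff v hv).mp hle with rfl | rfl
      · exact hvx rfl
      · exact hvy rfl
    omega
  have hn2_int : ∀ v ∈ P.verts, v ∈ B → v ≠ x → v ≠ y → n₂ v = 1 := by
    intro v hv hvB hvx hvy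
    exact hbal v ⟨⟨hv, hvB⟩, by simp [hvx, hvy]⟩
  have hterm_int : ∀ v ∈ WB, v ≠ x → v ≠ y → (n₁ v : ℤ) - (n₂ v : ℤ) = 0 := by
    intro v hv hvx hvy
    obtain ⟨hvP, hvB⟩ := (hmemWB v).mp hv
    have h1 := hadd v
    have h2 := hdeg_int v hvP hvx hvy
    have h3 := hn2_int v hvP hvB hvx hvy
    omega
  have key : VEGraph.wF F P =
      ∑ v ∈ WB.filter (fun v => v = x ∨ v = y), ((n₁ v : ℤ) - (n₂ v : ℤ)) := by
    have h0 : VEGraph.wF F P = ∑ v ∈ WB, ((n₁ v : ℤ) - (n₂ v : ℤ)) := by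
      rw [VEGraph.wF, hc1, hc2]
      push_cast
      rw [Finset.sum_sub_distrib]
    rw [h0]
    symm
    apply Finset.sum_subset (Finset.filter_subset _ _)
    intro v hv hvf
    have hne : ¬(v = x ∨ v = y) := fun h => hvf (Finset.mem_filter.mpr ⟨hv, h⟩)
    exact hterm_int v hv (fun h => hne (Or.inl h)) (fun h => hne (Or.inr h))
  -- endpoint degrees when the ends are distinct
  have hdeg_end : ∀ v w, v ∈ P.verts → w ∈ P.verts → v ≠ w → (v = x ∨ v = y) →
      P.deg v = 1 := by
    intro v w hv hw hvw hvend
    have hle := (hdegiff v hv).mpr hvend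
    have hge : 1 ≤ P.deg v := by
      have hr : Relation.ReflTransGen P.Adj v w := hPconn.2 v hv w hw
      rcases Relation.ReflTransGen.cases_head hr with rfl | ⟨c, hc, -⟩
      · exact absurd rfl hvw
      · have hne : ({e ∈ P.edges | v ∈ e}).Nonempty := ⟨s(v, c), hc, by simp⟩
        rw [VEGraph.deg]
        exact (Set.ncard_pos (Set.toFinite _)).mpr hne
    omega
  -- nonemptiness characterizations
  have hn2_pos : ∀ v, (n₂ v ≠ 0 ↔ ∃ e ∈ P.edges, v ∈ e ∧ e ∈ F) := by
    intro v
    have h0 := Set.ncard_eq_zero (s := {e ∈ P.edges ∩ F | v ∈ e}) (Set.toFinite _)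
    constructor
    · intro h
      obtain ⟨e, ⟨heP, heF⟩, hev⟩ :=
        Set.nonempty_iff_ne_empty.mpr (fun hemp => h (h0.mpr hemp))
      exact ⟨e, heP, hev, heF⟩
    · rintro ⟨e, heP, hev, heF⟩ hzero
      have := h0.mp hzero
      exact absurd (this ▸ (⟨⟨heP, heF⟩, hev⟩ : e ∈ {e ∈ P.edges ∩ F | v ∈ e}))
        (Set.notMem_empty e)
  have hn1_pos : ∀ v, (n₁ v ≠ 0 ↔ ∃ e ∈ P.edges, v ∈ e ∧ e ∉ F) := by
    intro v
    have h0 := Set.ncard_eq_zero (s := {e ∈ P.edges \ F | v ∈ e}) (Set.toFinite _)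
    constructor
    · intro h
      obtain ⟨e, ⟨heP, heF⟩, hev⟩ :=
        Set.nonempty_iff_ne_empty.mpr (fun hemp => h (h0.mpr hemp))
      exact ⟨e, heP, hev, heF⟩
    · rintro ⟨e, heP, hev, heF⟩ hzero
      have := h0.mp hzero
      exact absurd (this ▸ (⟨⟨heP, heF⟩, hev⟩ : e ∈ {e ∈ P.edges \ F | v ∈ e}))
        (Set.notMem_empty e)
  refine ⟨?_, ?_, ?_⟩
  · -- case (i): x, y ∈ A
    intro hxA hyA
    have hfil : WB.filter (fun v => v = x ∨ v = y) = ∅ := by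
      ext v
      simp only [Finset.mem_filter, Finset.notMem_empty, iff_false, not_and]
      intro hv
      obtain ⟨-, hvB⟩ := (hmemWB v).mp hv
      rintro (rfl | rfl)
      · exact Set.disjoint_left.mp hABdisj hxA hvB
      · exact Set.disjoint_left.mp hABdisj hyA hvB
    rw [key, hfil, Finset.sum_empty]
  · -- case (ii): x ∈ A, y ∈ B
    intro hxA hyB
    have hxy : x ≠ y := fun h => Set.disjoint_left.mp hABdisj hxA (h ▸ hyB)
    have hfil : WB.filter (fun v => v = x ∨ v = y) = {y} := by
      ext v
      simp only [Finset.mem_filter, Finset.mem_singleton]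
      constructor
      · rintro ⟨hv, rfl | rfl⟩
        · exact absurd ((hmemWB v).mp hv).2 (Set.disjoint_left.mp hABdisj hxA)
        · rfl
      · rintro rfl
        exact ⟨(hmemWB _).mpr ⟨hyP, hyB⟩, Or.inr rfl⟩
    have hdy : P.deg y = 1 := hdeg_end y x hyP hxP (Ne.symm hxy) (Or.inr rfl)
    have h12 : n₁ y + n₂ y = 1 := by rw [hadd y, hdy]
    rw [key, hfil, Finset.sum_singleton]
    have e1 := hn1_pos y
    have e2 := hn2_pos y
    refine ⟨by omega, ?_, ?_⟩
    · constructor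
      · intro h
        exact e2.mp (by omega)
      · intro h
        have := e2.mpr h
        omega
    · constructor
      · intro h
        exact e1.mp (by omega)
      · intro h
        have := e1.mpr h
        omega
  · -- case (iii): x, y ∈ B
    intro hxB hyB
    by_cases hxy : x = y
    · subst hxy
      have hfil : WB.filter (fun v => v = x ∨ v = x) = {x} := by
        ext v
        simp only [Finset.mem_filter, Finset.mem_singleton, or_self]
        constructor
        · rintro ⟨-, rfl⟩; rfl
        · rintro rfl
          exact ⟨(hmemWB _).mpr ⟨hxP, hxB⟩, rfl⟩
      -- parity argument: deg x = 0
      have hA2 : ∀ v ∈ WA, P.deg v = 2 := by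
        intro v hv
        obtain ⟨hvP, hvA⟩ := (hmemWA v).mp hv
        have hvx : v ≠ x := fun h => Set.disjoint_left.mp hABdisj hvA (h ▸ hxB)
        exact hdeg_int v hvP hvx hvx
      have hEA : P.edges.ncard = 2 * WA.card := by
        rw [hcA, Finset.sum_congr rfl hA2, Finset.sum_const, smul_eq_mul, mul_comm]
      have hxWB : x ∈ WB := (hmemWB x).mpr ⟨hxP, hxB⟩
      have hEB : P.edges.ncard = P.deg x + 2 * (WB.erase x).card := by
        rw [hcB, ← Finset.add_sum_erase _ _ hxWB]
        congr 1
        rw [Finset.sum_congr rfl (fun v hv => ?_), Finset.sum_const, smul_eq_mul, mul_comm]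
        obtain ⟨hvP, hvB⟩ := (hmemWB v).mp (Finset.mem_of_mem_erase hv)
        exact hdeg_int v hvP (Finset.ne_of_mem_erase hv) (Finset.ne_of_mem_erase hv)
      have hdx_le : P.deg x ≤ 1 := (hdegiff x hxP).mpr (Or.inl rfl)
      have hdx : P.deg x = 0 := by omega
      have h12 : n₁ x + n₂ x = 0 := by rw [hadd x, hdx]
      rw [key, hfil, Finset.sum_singleton]
      have e1 := hn1_pos x
      have e2 := hn2_pos x
      refine ⟨by omega, ?_, ?_⟩
      · constructor
        · intro h; omega
        · rintro ⟨h, -⟩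
          have := e2.mpr h
          omega
      · constructor
        · intro h; omega
        · rintro ⟨h, -⟩
          have := e1.mpr h
          omega
    · have hfil : WB.filter (fun v => v = x ∨ v = y) = {x, y} := by
        ext v
        simp only [Finset.mem_filter, Finset.mem_insert, Finset.mem_singleton]
        constructor
        · rintro ⟨-, h⟩; exact h
        · rintro (rfl | rfl)
          · exact ⟨(hmemWB v).mpr ⟨hxP, hxB⟩, Or.inl rfl⟩
          · exact ⟨(hmemWB v).mpr ⟨hyP, hyB⟩, Or.inr rfl⟩
      have hdx : P.deg x = 1 := hdeg_end x y hxP hyP hxy (Or.inl rfl)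
      have hdy : P.deg y = 1 := hdeg_end y x hyP hxP (Ne.symm hxy) (Or.inr rfl)
      have h12x : n₁ x + n₂ x = 1 := by rw [hadd x, hdx]
      have h12y : n₁ y + n₂ y = 1 := by rw [hadd y, hdy]
      rw [key, hfil, Finset.sum_pair hxy]
      have e1x := hn1_pos x
      have e2x := hn2_pos x
      have e1y := hn1_pos y
      have e2y := hn2_pos y
      refine ⟨by omega, ?_, ?_⟩
      · constructor
        · intro h
          exact ⟨e2x.mp (by omega), e2y.mp (by omega)⟩
        · rintro ⟨h1, h2⟩
          have := e2x.mpr h1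
          have := e2y.mpr h2
          omega
      · constructor
        · intro h
          exact ⟨e1x.mp (by omega), e1y.mp (by omega)⟩
        · rintro ⟨h1, h2⟩
          have := e1x.mpr h1
          have := e1y.mpr h2
          omega
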